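/- arXiv:2207.12457 — 2 statements merged into one kernel-verified Lean document; each statement's English description precedes it below -/
import Mathlib

section
/- (Positivity of ρ̃, Lemma 2(i).) Let 1/2 ≤ p ≤ 1, let p₊, p₋ ≥ 0 with p₊ + p₋ = 1, let v₊, v₋ be unit vectors in ℝ³, let z = (0,0,1), and assume p₊·v₊ + p₋·v₋ = (2p−1)·z. Then for every unit vector λ in ℝ³, ρ̃(λ) := (1/π)[ p₊·Θ(λ·v₊) + p₋·Θ(λ·v₋) − (2p−1)·Θ(λ·z) ] ≥ 0. -/
open MeasureTheory
open scoped RealInnerProductSpace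

/-- `Θ(z) = z` for `z ≥ 0` and `0` otherwise. -/
noncomputable def Theta (z : ℝ) : ℝ := if 0 ≤ z then z else 0

/-- The vector `z = (0,0,1)` in `ℝ³`. -/
noncomputable def zvec : EuclideanSpace ℝ (Fin 3) := EuclideanSpace.single 2 (1 : ℝ)

/-!
Taking the inner product of `p₊ v₊ + p₋ v₋ = (2p - 1) z` with `λ` gives
`(2p - 1) (λ · z) = p₊ (λ · v₊) + p₋ (λ · v₋)`. Since `2p - 1 ≥ 0` and `Θ = max · 0` is positively
homogeneous and convex, `(2p - 1) Θ(λ · z) = Θ(p₊ (λ · v₊) + p₋ (λ · v₋)) ≤ p₊ Θ(λ · v₊) + p₋ Θ(λ · v₋)`.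
-/

lemma Theta_eq_max (x : ℝ) : Theta x = max x 0 := by
  unfold Theta
  split_ifs with hx
  · exact (max_eq_left hx).symm
  · exact (max_eq_right (not_le.mp hx).le).symm

lemma Theta_mul_of_nonneg {c : ℝ} (hc : 0 ≤ c) (x : ℝ) : Theta (c * x) = c * Theta x := by
  simp only [Theta_eq_max, mul_max_of_nonneg _ _ hc, mul_zero]

lemma Theta_mul_add_mul_le {a b : ℝ} (ha : 0 ≤ a) (hb : 0 ≤ b) (x y : ℝ) :
    Theta (a * x + b * y) ≤ a * Theta x + b * Theta y := by
  simp only [Theta_eq_max]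
  exact max_le (by gcongr <;> exact le_max_left _ _) (by positivity)

theorem rhoTilde_nonneg_general
    (p pP pM : ℝ) (hp : 1 / 2 ≤ p)
    (hpP : 0 ≤ pP) (hpM : 0 ≤ pM)
    (vP vM : EuclideanSpace ℝ (Fin 3))
    (hcombo : pP • vP + pM • vM = (2 * p - 1) • zvec)
    (lam : EuclideanSpace ℝ (Fin 3)) :
    0 ≤ (1 / Real.pi) *
      (pP * Theta ⟪lam, vP⟫ + pM * Theta ⟪lam, vM⟫ - (2 * p - 1) * Theta ⟪lam, zvec⟫) := by
  have hinner : (2 * p - 1) * ⟪lam, zvec⟫ = pP * ⟪lam, vP⟫ + pM * ⟪lam, vM⟫ := by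
    simpa only [inner_add_right, real_inner_smul_right] using congrArg (⟪lam, ·⟫) hcombo.symm
  have hz : (2 * p - 1) * Theta ⟪lam, zvec⟫ ≤ pP * Theta ⟪lam, vP⟫ + pM * Theta ⟪lam, vM⟫ :=
    calc (2 * p - 1) * Theta ⟪lam, zvec⟫ = Theta (pP * ⟪lam, vP⟫ + pM * ⟪lam, vM⟫) := by
          rw [← hinner, Theta_mul_of_nonneg (by linarith)]
      _ ≤ pP * Theta ⟪lam, vP⟫ + pM * Theta ⟪lam, vM⟫ := Theta_mul_add_mul_le hpP hpM _ _
  exact mul_nonneg (by positivity) (sub_nonneg.mpr hz)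

/-- Lemma 2(i): positivity of `ρ̃`. -/
theorem rhoTilde_nonneg
    (p pP pM : ℝ) (hp : 1 / 2 ≤ p) (hp' : p ≤ 1)
    (hpP : 0 ≤ pP) (hpM : 0 ≤ pM) (hsum : pP + pM = 1)
    (vP vM : EuclideanSpace ℝ (Fin 3)) (hvP : ‖vP‖ = 1) (hvM : ‖vM‖ = 1)
    (hcombo : pP • vP + pM • vM = (2 * p - 1) • zvec)
    (lam : EuclideanSpace ℝ (Fin 3)) (hlam : ‖lam‖ = 1) :
    0 ≤ (1 / Real.pi) *
      (pP * Theta ⟪lam, vP⟫ + pM * Theta ⟪lam, vM⟫ - (2 * p - 1) * Theta ⟪lam, zvec⟫) :=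
  rhoTilde_nonneg_general p pP pM hp hpP hpM vP vM hcombo lam
end

section
/- (Second bound on ρ̃, Lemma 2(v).) Let 1/2 ≤ p ≤ 1 and set C := 2p−1. Let p₊, p₋ ≥ 0 with p₊ + p₋ = 1, let v₊, v₋ be unit vectors in ℝ³, let z = (0,0,1), and assume p₊·v₊ + p₋·v₋ = C·z. Then for every unit vector λ in ℝ³, ρ̃(λ) ≤ (1/(2π)) · (1−C²) / ( √(1 − C²·(1−(λ·z)²)) + C·|λ·z| ), where ρ̃(λ) := (1/π)[ p₊·Θ(λ·v₊) + p₋·Θ(λ·v₋) − C·Θ(λ·z) ]. (Writing λ·z = cos θ, the right-hand side equals (1/(2π))·(1−C²)/(√(1−C² sin²θ) + C|cos θ|).) -/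
open MeasureTheory
open scoped RealInnerProductSpace

/-- The extra density `ρ̃(λ)`, written with `C = 2p − 1`. -/
noncomputable def rhoTildeC (C pP pM : ℝ) (vP vM lam : EuclideanSpace ℝ (Fin 3)) : ℝ :=
  (1 / Real.pi) *
    (pP * Theta ⟪lam, vP⟫ + pM * Theta ⟪lam, vM⟫ - C * Theta ⟪lam, zvec⟫)

set_option maxHeartbeats 1000000

lemma zvec_norm : ‖zvec‖ = 1 := by
  simp [zvec, EuclideanSpace.norm_single]

lemma cs2 (x y v P Q : ℝ) (hP : 0 ≤ P) (hQ : 0 ≤ Q) (hv : v^2 ≤ P*Q) :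
    (x*y + v)^2 ≤ (x^2 + P) * (y^2 + Q) := by
  have hS : 0 ≤ x^2*Q + P*y^2 := by positivity
  have h3 : 4*(x^2*y^2)*v^2 ≤ 4*(x^2*y^2)*(P*Q) := by nlinarith [sq_nonneg (x*y)]
  have h4 : (2*(x*y*v))^2 ≤ (x^2*Q + P*y^2)^2 := by nlinarith [sq_nonneg (x^2*Q - P*y^2)]
  have h5 : 2*(x*y*v) ≤ x^2*Q + P*y^2 := by nlinarith [h4, hS]
  nlinarith [hv]

lemma scalar_key (m c dz C : ℝ) (hC0 : 0 ≤ C) (hC1 : C ≤ 1) (hc : c^2 ≤ 1) (hdz : dz^2 ≤ 1)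
    (hq : (m - c*dz)^2 ≤ (1-c^2)*((1-C^2)*(1-dz^2))) :
    m ≤ Real.sqrt (1 - C^2*(1-c^2)) := by
  rcases le_or_gt m 0 with hm | hm
  · exact hm.trans (Real.sqrt_nonneg _)
  · have hC2 : C^2 ≤ 1 := by nlinarith
    have hP : (0:ℝ) ≤ (1-c^2)*(1-C^2) := mul_nonneg (by linarith) (by linarith)
    have hQ : (0:ℝ) ≤ 1 - dz^2 := by linarith
    have h := cs2 c dz (m - c*dz) ((1-c^2)*(1-C^2)) (1-dz^2) hP hQ (by nlinarith [hq])
    have hm2 : m^2 ≤ 1 - C^2*(1-c^2) := by nlinarith [h]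
    calc m = Real.sqrt (m^2) := (Real.sqrt_sq hm.le).symm
    _ ≤ _ := Real.sqrt_le_sqrt hm2

lemma mixed_bound (C pP pM : ℝ) (hC0 : 0 ≤ C) (hC1 : C ≤ 1)
    (hpP : 0 ≤ pP) (hpM : 0 ≤ pM) (hsum : pP + pM = 1)
    (vP vM : EuclideanSpace ℝ (Fin 3)) (hvP : ‖vP‖ = 1) (hvM : ‖vM‖ = 1)
    (hcombo : pP • vP + pM • vM = C • zvec)
    (lam : EuclideanSpace ℝ (Fin 3)) (hlam : ‖lam‖ = 1) :
    ⟪lam, pP • vP - pM • vM⟫ ≤ Real.sqrt (1 - C^2*(1 - ⟪lam, zvec⟫^2)) := by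
  have hzz : ⟪zvec, zvec⟫ = 1 := by rw [real_inner_self_eq_norm_sq, zvec_norm]; norm_num
  have hPP : ⟪vP, vP⟫ = 1 := by rw [real_inner_self_eq_norm_sq, hvP]; norm_num
  have hMM : ⟪vM, vM⟫ = 1 := by rw [real_inner_self_eq_norm_sq, hvM]; norm_num
  have hll : ⟪lam, lam⟫ = 1 := by rw [real_inner_self_eq_norm_sq, hlam]; norm_num
  set d : EuclideanSpace ℝ (Fin 3) := pP • vP - pM • vM with hd
  set c : ℝ := ⟪lam, zvec⟫ with hcdef
  set m : ℝ := ⟪lam, d⟫ with hmdef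
  set dz : ℝ := ⟪zvec, d⟫ with hdzdef
  -- C * dz = pP² - pM²
  have hdzC : C * dz = pP^2 - pM^2 := by
    have h1 : C * dz = ⟪C • zvec, d⟫ := (real_inner_smul_left _ _ _).symm
    rw [← hcombo, hd] at h1
    simp only [inner_add_left, inner_sub_right, real_inner_smul_left, real_inner_smul_right,
      hPP, hMM] at h1
    rw [real_inner_comm vM vP] at h1
    rw [h1]; ring
  -- e = ⟪d,d⟫ = 2pP² + 2pM² - C²
  have he : ⟪d, d⟫ = 2*pP^2 + 2*pM^2 - C^2 := by
    have h2 : ⟪(pP • vP + pM • vM : EuclideanSpace ℝ (Fin 3)), pP • vP + pM • vM⟫ = C^2 := by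
      rw [hcombo]
      simp only [real_inner_smul_left, real_inner_smul_right, hzz]
      ring
    have h3 : ⟪d, d⟫ + ⟪(pP • vP + pM • vM : EuclideanSpace ℝ (Fin 3)), pP • vP + pM • vM⟫
        = 2*pP^2 + 2*pM^2 := by
      rw [hd]
      simp only [inner_add_left, inner_add_right, inner_sub_left, inner_sub_right,
        real_inner_smul_left, real_inner_smul_right, hPP, hMM]
      rw [real_inner_comm vM vP]
      ring
    rw [h2] at h3; linarith
  -- dz² ≤ 1
  have habs : ∀ w : EuclideanSpace ℝ (Fin 3), ‖w‖ = 1 → ⟪zvec, w⟫^2 ≤ 1 := by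
    intro w hw
    have := real_inner_mul_inner_self_le zvec w
    rw [real_inner_self_eq_norm_sq, real_inner_self_eq_norm_sq, hw, zvec_norm] at this
    nlinarith [this]
  have hzP := habs vP hvP
  have hzM := habs vM hvM
  have hdz1 : dz^2 ≤ 1 := by
    have hdzeq : dz = pP * ⟪zvec, vP⟫ - pM * ⟪zvec, vM⟫ := by
      rw [hdzdef, hd]
      simp only [inner_sub_right, real_inner_smul_right]
    have h1 : -1 ≤ ⟪zvec, vP⟫ ∧ ⟪zvec, vP⟫ ≤ 1 := by constructor <;> nlinarith [hzP]
    have h2 : -1 ≤ ⟪zvec, vM⟫ ∧ ⟪zvec, vM⟫ ≤ 1 := by constructor <;> nlinarith [hzM]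
    have hle : dz ≤ 1 := by rw [hdzeq]; nlinarith [h1.2, h2.1]
    have hge : -1 ≤ dz := by rw [hdzeq]; nlinarith [h1.1, h2.2]
    nlinarith
  -- c² ≤ 1
  have hc1 : c^2 ≤ 1 := by
    have := real_inner_mul_inner_self_le lam zvec
    rw [real_inner_self_eq_norm_sq, real_inner_self_eq_norm_sq, hlam, zvec_norm] at this
    nlinarith [this]
  -- Cauchy-Schwarz on residuals
  have hq : (m - c*dz)^2 ≤ (1-c^2)*((1-C^2)*(1-dz^2)) := by
    have hcs := real_inner_mul_inner_self_le (lam - c • zvec) (d - dz • zvec)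
    have e1 : ⟪lam - c • zvec, d - dz • zvec⟫ = m - c*dz := by
      simp only [inner_sub_left, inner_sub_right, real_inner_smul_left, real_inner_smul_right,
        hzz, ← hcdef, ← hmdef]
      rw [← hdzdef]; ring
    have e2 : ⟪lam - c • zvec, lam - c • zvec⟫ = 1 - c^2 := by
      simp only [inner_sub_left, inner_sub_right, real_inner_smul_left, real_inner_smul_right,
        hzz, hll]
      have hcomm : (inner ℝ zvec lam : ℝ) = c := by rw [hcdef]; exact real_inner_comm lam zvec
      rw [hcomm]; ring
    have e3 : ⟪d - dz • zvec, d - dz • zvec⟫ = (1-C^2)*(1-dz^2) := by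
      simp only [inner_sub_left, inner_sub_right, real_inner_smul_left, real_inner_smul_right,
        hzz, he]
      rw [real_inner_comm zvec d, ← hdzdef]
      have h4 : (C*dz)^2 = (pP^2-pM^2)^2 := by rw [hdzC]
      linear_combination (pP+pM+1)*(1-(pP-pM)^2)*hsum - h4
    rw [e1, e2, e3] at hcs
    nlinarith [hcs]
  exact scalar_key m c dz C hC0 hC1 hc1 hdz1 hq

lemma Theta_eq (x : ℝ) : Theta x = (x + |x|)/2 := by
  unfold Theta
  rcases le_or_gt 0 x with h | h
  · rw [if_pos h, abs_of_nonneg h]; ring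
  · rw [if_neg (not_le.2 h), abs_of_neg h]; ring

/-- Lemma 2(v): second bound on `ρ̃`, namely
`ρ̃(λ) ≤ (1/(2π)) (1−C²) / ( √(1 − C²(1−(λ·z)²)) + C|λ·z| )` with `C = 2p − 1`. -/
theorem rhoTilde_second_bound
    (p C pP pM : ℝ) (hp : 1 / 2 ≤ p) (hp' : p ≤ 1) (hC : C = 2 * p - 1)
    (hpP : 0 ≤ pP) (hpM : 0 ≤ pM) (hsum : pP + pM = 1)
    (vP vM : EuclideanSpace ℝ (Fin 3)) (hvP : ‖vP‖ = 1) (hvM : ‖vM‖ = 1)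
    (hcombo : pP • vP + pM • vM = C • zvec)
    (lam : EuclideanSpace ℝ (Fin 3)) (hlam : ‖lam‖ = 1) :
    rhoTildeC C pP pM vP vM lam ≤
      (1 / (2 * Real.pi)) * ((1 - C ^ 2) /
        (Real.sqrt (1 - C ^ 2 * (1 - ⟪lam, zvec⟫ ^ 2)) + C * |⟪lam, zvec⟫|)) := by
  have hπ : (0:ℝ) < Real.pi := Real.pi_pos
  have hC0 : 0 ≤ C := by rw [hC]; linarith
  have hC1 : C ≤ 1 := by rw [hC]; linarith
  set a : ℝ := ⟪lam, vP⟫ with ha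
  set b : ℝ := ⟪lam, vM⟫ with hb
  set c : ℝ := ⟪lam, zvec⟫ with hc'
  have hzn : ‖zvec‖ = 1 := zvec_norm
  have hlin : pP*a + pM*b = C*c := by
    have h1 : (inner ℝ lam (pP • vP + pM • vM) : ℝ) = inner ℝ lam (C • zvec) := by rw [hcombo]
    simp only [inner_add_right, real_inner_smul_right] at h1
    rw [ha, hb, hc']; exact h1
  have hc1 : c^2 ≤ 1 := by
    have := real_inner_mul_inner_self_le lam zvec
    rw [real_inner_self_eq_norm_sq, real_inner_self_eq_norm_sq, hlam, hzn] at this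
    nlinarith [this]
  have hnn : (0:ℝ) ≤ 1 - C^2*(1-c^2) := by nlinarith
  set R : ℝ := Real.sqrt (1 - C^2*(1-c^2)) with hRdef
  have hR2 : R^2 = 1 - C^2*(1-c^2) := Real.sq_sqrt hnn
  have hR0 : 0 ≤ R := Real.sqrt_nonneg _
  have hCc0 : 0 ≤ C * |c| := mul_nonneg hC0 (abs_nonneg _)
  have hRC : C * |c| ≤ R := by
    have h1 : (C*|c|)^2 ≤ 1 - C^2*(1-c^2) := by rw [mul_pow, sq_abs]; nlinarith
    calc C*|c| = Real.sqrt ((C*|c|)^2) := (Real.sqrt_sq hCc0).symm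
    _ ≤ R := Real.sqrt_le_sqrt h1
  have hRHSeq : (1 - C^2) / (R + C*|c|) = R - C*|c| := by
    rcases eq_or_lt_of_le (add_nonneg hR0 hCc0) with h0 | h0
    · have hR : R = 0 := by linarith
      have hCc : C*|c| = 0 := by linarith
      have hc2 : C^2*c^2 = 0 := by nlinarith [hCc]
      have hnum : 1 - C^2 = 0 := by nlinarith [hR2, hR]
      rw [hnum, hR, hCc]; simp
    · rw [div_eq_iff (by linarith)]
      have : C^2*c^2 = (C*|c|)^2 := by rw [mul_pow, sq_abs]
      nlinarith [hR2]
  have hkey : pP*|a| + pM*|b| ≤ R := by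
    have habs2 : C*c ≤ C*|c| := mul_le_mul_of_nonneg_left (le_abs_self c) hC0
    have habs3 : -(C*c) ≤ C*|c| := by
      have := mul_le_mul_of_nonneg_left (neg_abs_le c) hC0
      linarith
    rcases le_or_gt 0 a with haa | haa <;> rcases le_or_gt 0 b with hbb | hbb
    · rw [abs_of_nonneg haa, abs_of_nonneg hbb, hlin]
      linarith
    · rw [abs_of_nonneg haa, abs_of_neg hbb]
      have hm := mixed_bound C pP pM hC0 hC1 hpP hpM hsum vP vM hvP hvM hcombo lam hlam
      have hexp : (inner ℝ lam (pP • vP - pM • vM) : ℝ) = pP*a - pM*b := by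
        rw [ha, hb]; simp only [inner_sub_right, real_inner_smul_right]
      rw [hexp] at hm
      calc pP*a + pM*(-b) = pP*a - pM*b := by ring
      _ ≤ R := hm
    · rw [abs_of_neg haa, abs_of_nonneg hbb]
      have hcombo' : pM • vM + pP • vP = C • zvec := by rw [add_comm]; exact hcombo
      have hsum' : pM + pP = 1 := by linarith
      have hm := mixed_bound C pM pP hC0 hC1 hpM hpP hsum' vM vP hvM hvP hcombo' lam hlam
      have hexp : (inner ℝ lam (pM • vM - pP • vP) : ℝ) = pM*b - pP*a := by
        rw [ha, hb]; simp only [inner_sub_right, real_inner_smul_right]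
      rw [hexp] at hm
      calc pP*(-a) + pM*b = pM*b - pP*a := by ring
      _ ≤ R := hm
    · rw [abs_of_neg haa, abs_of_neg hbb]
      have : pP*(-a) + pM*(-b) = -(C*c) := by rw [← hlin]; ring
      rw [this]
      linarith
  have hgoal2 : (1 - C ^ 2) / (Real.sqrt (1 - C ^ 2 * (1 - c ^ 2)) + C * |c|) = R - C*|c| := hRHSeq
  rw [hgoal2]
  have hlhs : rhoTildeC C pP pM vP vM lam
      = (1/(2*Real.pi)) * ((pP*a + pM*b - C*c) + (pP*|a| + pM*|b| - C*|c|)) := by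
    unfold rhoTildeC
    rw [Theta_eq, Theta_eq, Theta_eq, ← ha, ← hb, ← hc']
    field_simp
    ring
  rw [hlhs, hlin]
  have h2π : (0:ℝ) < 1/(2*Real.pi) := by positivity
  have : C*c + (pP*|a| + pM*|b| - C*|c|) ≤ R - C*|c| + C*c := by linarith
  nlinarith [hkey, h2π]
end
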